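/- arXiv:1507.05350 — 2 statements merged into one kernel-verified Lean document; each statement's English description precedes it below -/
import Mathlib

section
/- Let θ be a proper convex piecewise linear function on ℝ^m and z̄ ∈ dom θ. Then the linear subspace S(z̄) parallel to the affine hull of ∂θ(z̄) is given explicitly by S(z̄) = span{a_i − a_j : i,j ∈ K(z̄)} + span{d_i : i ∈ I(z̄)}. -/
noncomputable section
open Set Filter Topology Metric
open scoped RealInnerProductSpace Pointwise NNReal Classical

/-- `Euc m` is the Euclidean space `ℝ^m`. -/
abbrev Euc (m : ℕ) := EuclideanSpace ℝ (Fin m)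

variable {F G : Type*} [NormedAddCommGroup F] [InnerProductSpace ℝ F]
  [NormedAddCommGroup G] [InnerProductSpace ℝ G]

/-- The (convex) subdifferential of an extended-real-valued function:
`∂θ(z) = {v : θ(z') ≥ θ(z) + ⟨v, z' - z⟩ for all z'}`. -/
def subdiff (θ : F → EReal) (z : F) : Set F :=
  {v | ∀ z', θ z + ((⟪v, z' - z⟫ : ℝ) : EReal) ≤ θ z'}

/-- The Fréchet (regular) normal cone to `Ω` at `x`:
vectors `v` with `limsup_{y → x, y ∈ Ω} ⟨v, y - x⟩ / ‖y - x‖ ≤ 0`. -/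
def frechetNormal (Ω : Set F) (x : F) : Set F :=
  {v | Filter.limsup (fun y => ⟪v, y - x⟫ / ‖y - x‖) (𝓝[Ω] x) ≤ 0}

/-- The limiting (Mordukhovich) normal cone to `Ω` at `x`. -/
def limitingNormal (Ω : Set F) (x : F) : Set F :=
  {v | ∃ xs vs : ℕ → F, (∀ k, xs k ∈ Ω) ∧ Filter.Tendsto xs Filter.atTop (𝓝 x) ∧
    Filter.Tendsto vs Filter.atTop (𝓝 v) ∧ ∀ k, vs k ∈ frechetNormal Ω (xs k)}

/-- Pairing into the `ℓ²`-product of two inner product spaces. -/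
def pl2 (x : F) (y : G) : WithLp 2 (F × G) := (WithLp.equiv 2 (F × G)).symm (x, y)

/-- The second-order subdifferential (generalized Hessian)
`∂²θ(z,v)(u) = {w : (w,-u) ∈ N((z,v); gph ∂θ)}`. -/
def sosd (θ : F → EReal) (z v : F) (u : F) : Set F :=
  {w | pl2 w (-u) ∈ limitingNormal
    {q : WithLp 2 (F × F) | ((WithLp.equiv 2 (F × F)) q).2 ∈ subdiff θ ((WithLp.equiv 2 (F × F)) q).1}
    (pl2 z v)}

/-- The polyhedral domain `{z : ⟨d i, z⟩ ≤ β i for all i}` of a CPWL function. -/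
def cpwlDom {m p : ℕ} (d : Fin p → Euc m) (β : Fin p → ℝ) : Set (Euc m) :=
  {z | ∀ i, ⟪d i, z⟫ ≤ β i}

/-- The CPWL function determined by the data `(a, α, d, β)`:
`θ(z) = max_i (⟨a i, z⟩ - α i)` on its polyhedral domain and `+∞` outside. -/
def cpwlFun {m l p : ℕ} (a : Fin l → Euc m) (α : Fin l → ℝ) (d : Fin p → Euc m)
    (β : Fin p → ℝ) : Euc m → EReal :=
  fun z => if z ∈ cpwlDom d β then (((⨆ i, (⟪a i, z⟫ - α i)) : ℝ) : EReal) else ⊤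

/-- Active indices of the max expression at `z`. -/
def Kact {m l p : ℕ} (a : Fin l → Euc m) (α : Fin l → ℝ) (d : Fin p → Euc m) (β : Fin p → ℝ)
    (z : Euc m) : Set (Fin l) :=
  {i | cpwlFun a α d β z = ((⟪a i, z⟫ - α i : ℝ) : EReal)}

/-- Active indices of the domain inequalities at `z`. -/
def Iact {m p : ℕ} (d : Fin p → Euc m) (β : Fin p → ℝ) (z : Euc m) : Set (Fin p) :=
  {i | ⟪d i, z⟫ = β i}

/-- Convex conic hull: all finite nonnegative combinations of elements of `s`. -/
def coneHull (s : Set F) : Set F :=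
  {x | ∃ (n : ℕ) (c : Fin n → ℝ) (y : Fin n → F), (∀ i, 0 ≤ c i) ∧ (∀ i, y i ∈ s) ∧
    x = ∑ i, c i • y i}

/-- `Spar θ z` is the linear subspace parallel to the affine hull of `∂θ(z)`. -/
def Spar (θ : F → EReal) (z : F) : Submodule ℝ F := (affineSpan ℝ (subdiff θ z)).direction

/-- A convex polyhedron: a finite intersection of closed halfspaces. -/
def IsPolyhedron {V : Type*} [AddCommGroup V] [Module ℝ V] (C : Set V) : Prop :=
  ∃ (N : ℕ) (f : Fin N → V →ₗ[ℝ] ℝ) (b : Fin N → ℝ), C = {x | ∀ i, f i x ≤ b i}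

/-- A proper convex piecewise linear function with values in `ℝ ∪ {+∞}`:
its epigraph is a convex polyhedron, it never takes the value `-∞`, and it is
not identically `+∞`. -/
def IsCPWL {V : Type*} [AddCommGroup V] [Module ℝ V] (f : V → EReal) : Prop :=
  IsPolyhedron {xt : V × ℝ | f xt.1 ≤ (xt.2 : EReal)} ∧ (∀ x, f x ≠ ⊥) ∧ (∃ x, f x ≠ ⊤)

/-- Local argmin set `M_γ(w,v)` of `x ↦ φ(x,w) - ⟨v,x⟩` over the ball `‖x - xb‖ ≤ γ`,
with the convention that minimizers at which the objective is `+∞` are discarded. -/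
def argminLoc {n d : ℕ} (φ : Euc n → Euc d → EReal) (xb : Euc n) (γ : ℝ) (w : Euc d)
    (v : Euc n) : Set (Euc n) :=
  {x | ‖x - xb‖ ≤ γ ∧ φ x w ≠ ⊤ ∧
    ∀ y, ‖y - xb‖ ≤ γ → φ x w - ((⟪v, x⟫ : ℝ) : EReal) ≤ φ y w - ((⟪v, y⟫ : ℝ) : EReal)}

/-- Local optimal value `m_γ(w,v)` of `x ↦ φ(x,w) - ⟨v,x⟩` over the ball `‖x - xb‖ ≤ γ`. -/
def infLoc {n d : ℕ} (φ : Euc n → Euc d → EReal) (xb : Euc n) (γ : ℝ) (w : Euc d)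
    (v : Euc n) : EReal :=
  ⨅ x ∈ {x : Euc n | ‖x - xb‖ ≤ γ}, (φ x w - ((⟪v, x⟫ : ℝ) : EReal))

/-- `xb` is a fully stable locally optimal solution of
`minimize φ(x,wb) - ⟨vb,x⟩` : for some `γ > 0` and neighborhoods `W × V` of `(wb,vb)`,
the local argmin map is single-valued and Lipschitz with value `xb` at `(wb,vb)`, and the
local optimal value function is finite and Lipschitz. -/
def FullyStableSol {n d : ℕ} (φ : Euc n → Euc d → EReal) (xb : Euc n) (wb : Euc d)
    (vb : Euc n) : Prop :=
  ∃ γ > (0 : ℝ), ∃ W ∈ 𝓝 wb, ∃ V ∈ 𝓝 vb,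
    (∃ σ : Euc d × Euc n → Euc n,
      (∃ K : ℝ≥0, LipschitzOnWith K σ (W ×ˢ V)) ∧
      (∀ w ∈ W, ∀ v ∈ V, argminLoc φ xb γ w v = {σ (w, v)}) ∧ σ (wb, vb) = xb) ∧
    (∃ μ : Euc d × Euc n → ℝ,
      (∃ K : ℝ≥0, LipschitzOnWith K μ (W ×ˢ V)) ∧
      ∀ w ∈ W, ∀ v ∈ V, infLoc φ xb γ w v = ((μ (w, v) : ℝ) : EReal))

/-- The partial limiting subdifferential `∂ₓψ(x,w)` defined through the limiting normal
cone to the epigraph of `ψ(·,w)`. -/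
def partialSubdiffX {n d : ℕ} (ψ : Euc n → Euc d → EReal) (x : Euc n) (w : Euc d) :
    Set (Euc n) :=
  {v | ∃ r : ℝ, ψ x w = (r : EReal) ∧
    pl2 v (-1 : ℝ) ∈ limitingNormal
      {q : WithLp 2 (Euc n × ℝ) |
        ψ ((WithLp.equiv 2 (Euc n × ℝ)) q).1 w ≤ ((((WithLp.equiv 2 (Euc n × ℝ)) q).2 : ℝ) : EReal)}
      (pl2 x r)}

/-- The coderivative `D*∂ₓψ(xb,wb,qb)(u)` of the partial subdifferential mapping,
via the limiting normal cone to its graph in `ℝ^n × ℝ^d × ℝ^n`. -/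
def coderivPartialSubdiffX {n d : ℕ} (ψ : Euc n → Euc d → EReal) (xb : Euc n) (wb : Euc d)
    (qb : Euc n) (u : Euc n) : Set (Euc n × Euc d) :=
  {P | pl2 (pl2 P.1 P.2) (-u) ∈ limitingNormal
    {t : WithLp 2 (WithLp 2 (Euc n × Euc d) × Euc n) |
      ((WithLp.equiv 2 (WithLp 2 (Euc n × Euc d) × Euc n)) t).2 ∈ partialSubdiffX ψ
        ((WithLp.equiv 2 (Euc n × Euc d)) (((WithLp.equiv 2 (WithLp 2 (Euc n × Euc d) × Euc n)) t).1)).1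
        ((WithLp.equiv 2 (Euc n × Euc d)) (((WithLp.equiv 2 (WithLp 2 (Euc n × Euc d) × Euc n)) t).1)).2}
    (pl2 (pl2 xb wb) qb)}

/-- Partial Hessian in `x` : the derivative in `x` of the partial gradient in `x`. -/
def hessXX {n d : ℕ} (g : Euc n → Euc d → ℝ) (xb : Euc n) (wb : Euc d) : Euc n →L[ℝ] Euc n :=
  fderiv ℝ (fun x => gradient (fun x' => g x' wb) x) xb

/-- Mixed partial Hessian: derivative in `w` of the partial gradient in `x`. -/
def hessWX {n d : ℕ} (g : Euc n → Euc d → ℝ) (xb : Euc n) (wb : Euc d) : Euc d →L[ℝ] Euc n :=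
  fderiv ℝ (fun w => gradient (fun x' => g x' w) xb) wb

/-! If `i₀ ∈ K(z̄)`, every `a i` with `i ∈ K(z̄)` and every `a i₀ + d j` with `j ∈ I(z̄)` is a
subgradient at `z̄`, which gives `⊇`. Conversely, if `u` is orthogonal to the right-hand side, then
`z̄ + t u` stays in the domain for small `|t|`, and all pieces that can be active there grow at the
same rate `⟪a i₀, u⟫`; so `θ` is affine with slope `⟪a i₀, u⟫` along this line near `z̄`, and
the subgradient inequality for both signs of `t` forces `⟪v - a i₀, u⟫ = 0` for every
subgradient `v`. -/

lemma eq_of_eventually_mul_le_mul {x y : ℝ} (h : ∀ᶠ t in 𝓝 (0 : ℝ), t * x ≤ t * y) : x = y := by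
  obtain ⟨ε, hε, hball⟩ := Metric.eventually_nhds_iff.1 h
  have hpos : ε / 2 * x ≤ ε / 2 * y :=
    hball (by rw [Real.dist_eq, sub_zero, abs_of_pos (half_pos hε)]; linarith)
  have hneg : -(ε / 2) * x ≤ -(ε / 2) * y :=
    hball (by rw [Real.dist_eq, sub_zero, abs_neg, abs_of_pos (half_pos hε)]; linarith)
  nlinarith

lemma eventually_add_mul_lt {c b : ℝ} (h : c < b) (s : ℝ) :
    ∀ᶠ t in 𝓝 (0 : ℝ), c + t * s < b := by
  have hcont : Continuous fun t : ℝ => c + t * s := by fun_prop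
  exact (hcont.tendsto' 0 c (by simp)).eventually (gt_mem_nhds h)

section CPWL

variable {m l p : ℕ} (a : Fin l → Euc m) (α : Fin l → ℝ) (d : Fin p → Euc m) (β : Fin p → ℝ)

lemma cpwlFun_of_mem {z : Euc m} (hz : z ∈ cpwlDom d β) :
    cpwlFun a α d β z = (((⨆ i, (⟪a i, z⟫ - α i)) : ℝ) : EReal) := if_pos hz

lemma inner_sub_le_iSup (z : Euc m) (i : Fin l) :
    ⟪a i, z⟫ - α i ≤ ⨆ j, (⟪a j, z⟫ - α j) :=
  le_ciSup (f := fun j => ⟪a j, z⟫ - α j) (Set.finite_range _).bddAbove i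

lemma mem_Kact_iff {z : Euc m} (hz : z ∈ cpwlDom d β) (i : Fin l) :
    i ∈ Kact a α d β z ↔ (⨆ j, (⟪a j, z⟫ - α j)) = ⟪a i, z⟫ - α i := by
  show cpwlFun a α d β z = _ ↔ _
  rw [cpwlFun_of_mem a α d β hz, EReal.coe_eq_coe_iff]

lemma Kact_nonempty [Nonempty (Fin l)] {z : Euc m} (hz : z ∈ cpwlDom d β) :
    (Kact a α d β z).Nonempty := by
  obtain ⟨i, hi⟩ := exists_eq_ciSup_of_finite (f := fun j => ⟪a j, z⟫ - α j)
  exact ⟨i, (mem_Kact_iff a α d β hz i).2 hi.symm⟩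

lemma mem_subdiff_cpwlFun_of_forall {z : Euc m} (hz : z ∈ cpwlDom d β) {v : Euc m}
    (h : ∀ z' ∈ cpwlDom d β,
      (⨆ i, (⟪a i, z⟫ - α i)) + ⟪v, z' - z⟫ ≤ ⨆ i, (⟪a i, z'⟫ - α i)) :
    v ∈ subdiff (cpwlFun a α d β) z := by
  intro z'
  rw [cpwlFun_of_mem a α d β hz]
  by_cases hz' : z' ∈ cpwlDom d β
  · rw [cpwlFun_of_mem a α d β hz', ← EReal.coe_add, EReal.coe_le_coe_iff]
    exact h z' hz'
  · rw [cpwlFun, if_neg hz']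
    exact le_top

lemma a_mem_subdiff_cpwlFun {z : Euc m} (hz : z ∈ cpwlDom d β) {i : Fin l}
    (hi : i ∈ Kact a α d β z) : a i ∈ subdiff (cpwlFun a α d β) z := by
  refine mem_subdiff_cpwlFun_of_forall a α d β hz fun z' _ => ?_
  rw [(mem_Kact_iff a α d β hz i).1 hi, inner_sub_right]
  linarith [inner_sub_le_iSup a α z' i]

lemma add_mem_subdiff_cpwlFun {z : Euc m} (hz : z ∈ cpwlDom d β) {i : Fin l} {j : Fin p}
    (hi : i ∈ Kact a α d β z) (hj : j ∈ Iact d β z) :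
    a i + d j ∈ subdiff (cpwlFun a α d β) z := by
  refine mem_subdiff_cpwlFun_of_forall a α d β hz fun z' hz' => ?_
  have hj' : ⟪d j, z⟫ = β j := hj
  rw [(mem_Kact_iff a α d β hz i).1 hi, inner_add_left, inner_sub_right, inner_sub_right]
  linarith [inner_sub_le_iSup a α z' i, hz' j]

lemma eventually_add_smul_mem_cpwlDom {z u : Euc m} (hz : z ∈ cpwlDom d β)
    (hu : ∀ j ∈ Iact d β z, ⟪d j, u⟫ = 0) :
    ∀ᶠ t in 𝓝 (0 : ℝ), z + t • u ∈ cpwlDom d β := by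
  show ∀ᶠ t in 𝓝 (0 : ℝ), ∀ j, ⟪d j, z + t • u⟫ ≤ β j
  refine eventually_all.2 fun j => ?_
  simp only [inner_add_right, real_inner_smul_right]
  rcases (hz j).eq_or_lt with hj | hj
  · exact .of_forall fun t => by rw [hu j hj, hj, mul_zero, add_zero]
  · exact (eventually_add_mul_lt hj _).mono fun t ht => ht.le

lemma eventually_iSup_add_smul {z u : Euc m} (hz : z ∈ cpwlDom d β) {i₀ : Fin l}
    (hi₀ : i₀ ∈ Kact a α d β z) (hu : ∀ i ∈ Kact a α d β z, ⟪a i, u⟫ = ⟪a i₀, u⟫) :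
    ∀ᶠ t in 𝓝 (0 : ℝ), (⨆ i, (⟪a i, z + t • u⟫ - α i)) =
      (⨆ i, (⟪a i, z⟫ - α i)) + t * ⟪a i₀, u⟫ := by
  have hpiece : ∀ᶠ t in 𝓝 (0 : ℝ), ∀ i,
      ⟪a i, z + t • u⟫ - α i ≤ (⨆ i, (⟪a i, z⟫ - α i)) + t * ⟪a i₀, u⟫ := by
    refine eventually_all.2 fun i => ?_
    simp only [inner_add_right, real_inner_smul_right]
    by_cases hi : i ∈ Kact a α d β z
    · refine .of_forall fun t => ?_
      rw [hu i hi, (mem_Kact_iff a α d β hz i).1 hi]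
      linarith
    · have hlt : ⟪a i, z⟫ - α i < ⨆ j, (⟪a j, z⟫ - α j) :=
        (inner_sub_le_iSup a α z i).lt_of_ne fun h => hi ((mem_Kact_iff a α d β hz i).2 h.symm)
      filter_upwards [eventually_add_mul_lt hlt (⟪a i, u⟫ - ⟪a i₀, u⟫)] with t ht
      linarith
  have : Nonempty (Fin l) := ⟨i₀⟩
  filter_upwards [hpiece] with t ht
  refine le_antisymm (ciSup_le ht) ?_
  calc (⨆ i, (⟪a i, z⟫ - α i)) + t * ⟪a i₀, u⟫ = ⟪a i₀, z + t • u⟫ - α i₀ := by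
        rw [inner_add_right, real_inner_smul_right, (mem_Kact_iff a α d β hz i₀).1 hi₀]
        ring
    _ ≤ _ := inner_sub_le_iSup a α _ i₀

lemma inner_eq_of_mem_subdiff_cpwlFun {z u v : Euc m} (hz : z ∈ cpwlDom d β)
    (hv : v ∈ subdiff (cpwlFun a α d β) z) {i₀ : Fin l} (hi₀ : i₀ ∈ Kact a α d β z)
    (hK : ∀ i ∈ Kact a α d β z, ⟪a i, u⟫ = ⟪a i₀, u⟫) (hI : ∀ j ∈ Iact d β z, ⟪d j, u⟫ = 0) :
    ⟪v, u⟫ = ⟪a i₀, u⟫ := by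
  refine eq_of_eventually_mul_le_mul ?_
  filter_upwards [eventually_add_smul_mem_cpwlDom d β hz hI,
    eventually_iSup_add_smul a α d β hz hi₀ hK] with t hdom hval
  have hsub := hv (z + t • u)
  rw [cpwlFun_of_mem a α d β hz, cpwlFun_of_mem a α d β hdom, ← EReal.coe_add,
    EReal.coe_le_coe_iff, hval, add_sub_cancel_left, real_inner_smul_right] at hsub
  linarith

lemma sub_mem_sup_of_mem_subdiff_cpwlFun {z v : Euc m} (hz : z ∈ cpwlDom d β)
    (hv : v ∈ subdiff (cpwlFun a α d β) z) {i₀ : Fin l} (hi₀ : i₀ ∈ Kact a α d β z) :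
    v - a i₀ ∈ Submodule.span ℝ (image2 (fun i j => a i - a j) (Kact a α d β z) (Kact a α d β z)) ⊔
      Submodule.span ℝ (d '' Iact d β z) := by
  rw [← Submodule.orthogonal_orthogonal (_ ⊔ _), Submodule.mem_orthogonal]
  intro u hu
  have hu' := (Submodule.mem_orthogonal _ _).1 hu
  have hK : ∀ i ∈ Kact a α d β z, ⟪a i, u⟫ = ⟪a i₀, u⟫ := fun i hi => by
    have := hu' _ (Submodule.mem_sup_left (Submodule.subset_span (mem_image2_of_mem hi hi₀)))
    rwa [inner_sub_left, sub_eq_zero] at this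
  have hI : ∀ j ∈ Iact d β z, ⟪d j, u⟫ = 0 := fun j hj =>
    hu' _ (Submodule.mem_sup_right (Submodule.subset_span (mem_image_of_mem d hj)))
  rw [real_inner_comm, inner_sub_left, inner_eq_of_mem_subdiff_cpwlFun a α d β hz hv hi₀ hK hI,
    sub_self]

lemma Spar_cpwlFun_eq [Nonempty (Fin l)] {z : Euc m} (hz : z ∈ cpwlDom d β) :
    Spar (cpwlFun a α d β) z =
      Submodule.span ℝ (image2 (fun i j => a i - a j) (Kact a α d β z) (Kact a α d β z)) ⊔
        Submodule.span ℝ (d '' Iact d β z) := by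
  obtain ⟨i₀, hi₀⟩ := Kact_nonempty a α d β hz
  have ha₀ := a_mem_subdiff_cpwlFun a α d β hz hi₀
  rw [Spar, direction_affineSpan]
  apply le_antisymm
  · rw [vectorSpan_eq_span_vsub_set_right ℝ ha₀, Submodule.span_le]
    rintro _ ⟨v, hv, rfl⟩
    exact sub_mem_sup_of_mem_subdiff_cpwlFun a α d β hz hv hi₀
  · refine sup_le (Submodule.span_le.2 ?_) (Submodule.span_le.2 ?_)
    · rintro _ ⟨i, hi, j, hj, rfl⟩
      exact vsub_mem_vectorSpan ℝ (a_mem_subdiff_cpwlFun a α d β hz hi)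
        (a_mem_subdiff_cpwlFun a α d β hz hj)
    · rintro _ ⟨j, hj, rfl⟩
      simpa using vsub_mem_vectorSpan ℝ (add_mem_subdiff_cpwlFun a α d β hz hi₀ hj) ha₀

end CPWL

theorem parallel_subspace_eq_span_add_span_general {m l p : ℕ} (hl : 0 < l)
    (a : Fin l → Euc m) (α : Fin l → ℝ) (d : Fin p → Euc m) (β : Fin p → ℝ)
    (zb : Euc m) (hzb : zb ∈ cpwlDom d β) :
    (Spar (cpwlFun a α d β) zb : Set (Euc m)) =
      (Submodule.span ℝ
          (Set.image2 (fun i j => a i - a j) (Kact a α d β zb) (Kact a α d β zb)) : Set (Euc m)) +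
      (Submodule.span ℝ (d '' Iact d β zb) : Set (Euc m)) := by
  have : Nonempty (Fin l) := ⟨⟨0, hl⟩⟩
  rw [Spar_cpwlFun_eq a α d β hzb, Submodule.coe_sup]

/-- The subspace parallel to the affine hull of `∂θ(zb)` is
`S(zb) = span{a i - a j : i,j ∈ K(zb)} + span{d i : i ∈ I(zb)}`. -/
theorem parallel_subspace_eq_span_add_span {m l p : ℕ} (hl : 0 < l)
    (a : Fin l → Euc m) (α : Fin l → ℝ) (d : Fin p → Euc m) (β : Fin p → ℝ)
    (hdom : (cpwlDom d β).Nonempty) (zb : Euc m) (hzb : zb ∈ cpwlDom d β) :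
    (Spar (cpwlFun a α d β) zb : Set (Euc m)) =
      (Submodule.span ℝ
          (Set.image2 (fun i j => a i - a j) (Kact a α d β zb) (Kact a α d β zb)) : Set (Euc m)) +
      (Submodule.span ℝ (d '' Iact d β zb) : Set (Euc m)) :=
  parallel_subspace_eq_span_add_span_general hl a α d β zb hzb
end
end

section
/- Let θ be a proper convex piecewise linear function on ℝ^m, z̄ ∈ dom θ, and v̄ ∈ ∂θ(z̄). Then the singular subdifferential of θ at z̄, which for the convex function θ equals the convex normal cone {v ∈ ℝ^m : ⟨v, z − z̄⟩ ≤ 0 for all z ∈ dom θ} = cone{d_i : i ∈ I(z̄)}, is contained in ∂²θ(z̄,v̄)(0). Consequently, if ∂²θ(z̄,v̄)(0) ∩ ker ∇_xΦ(x̄,w̄)* = {0} for a C²-smooth mapping Φ : ℝ^n × ℝ^d → ℝ^m with Φ(x̄,w̄) = z̄, then also the first-order qualification condition {v : ⟨v, z − z̄⟩ ≤ 0 for all z ∈ dom θ} ∩ ker ∇_xΦ(x̄,w̄)* = {0} holds. -/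
noncomputable section
open Set Filter Topology Metric
open scoped RealInnerProductSpace Pointwise NNReal Classical

variable {F G : Type*} [NormedAddCommGroup F] [InnerProductSpace ℝ F]
  [NormedAddCommGroup G] [InnerProductSpace ℝ G]

/-!
By Farkas' lemma, the normal cone to the polyhedron `dom θ` at `zb` is the cone generated by
the active constraint normals `d i`, `i ∈ I(zb)`; Farkas applies because a finitely generated
cone is closed, being (conic Carathéodory) a finite union of images of orthants under injective
linear maps. Since `gph ∂θ ⊆ dom θ × ℝ^m`, every `v` in this normal cone makes `(v, 0)` a
Fréchet, hence limiting, normal to `gph ∂θ` at `(zb, vb)`, i.e. `v ∈ ∂²θ(zb,vb)(0)`. The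
implication between the qualification conditions is then monotonicity of the intersection.
-/

section ConicSpan

variable {E : Type*} [AddCommGroup E] [Module ℝ E]

def conicSpan (T : Finset E) : Set E :=
  {x | ∃ c : E → ℝ, 0 ≤ c ∧ x = ∑ s ∈ T, c s • s}

lemma zero_mem_conicSpan (T : Finset E) : (0 : E) ∈ conicSpan T :=
  ⟨0, le_rfl, by simp⟩

lemma mem_conicSpan_of_mem {T : Finset E} {x : E} (hx : x ∈ T) : x ∈ conicSpan T := by
  refine ⟨Pi.single x 1, Pi.single_nonneg.mpr zero_le_one, ?_⟩
  rw [Finset.sum_eq_single_of_mem x hx fun s _ hs => by simp [hs]]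
  simp

lemma add_mem_conicSpan {T : Finset E} {x y : E} (hx : x ∈ conicSpan T)
    (hy : y ∈ conicSpan T) : x + y ∈ conicSpan T := by
  obtain ⟨c, hc, rfl⟩ := hx
  obtain ⟨c', hc', rfl⟩ := hy
  exact ⟨c + c', add_nonneg hc hc', by simp [add_smul, Finset.sum_add_distrib]⟩

lemma smul_mem_conicSpan {T : Finset E} {x : E} (hx : x ∈ conicSpan T) {t : ℝ} (ht : 0 ≤ t) :
    t • x ∈ conicSpan T := by
  obtain ⟨c, hc, rfl⟩ := hx
  exact ⟨t • c, smul_nonneg ht hc, by simp [Finset.smul_sum, smul_smul]⟩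

lemma conicSpan_mono {T T' : Finset E} (h : T ⊆ T') : conicSpan T ⊆ conicSpan T' := by
  rintro x ⟨c, hc, rfl⟩
  refine ⟨fun s => if s ∈ T then c s else 0, fun s => ?_, ?_⟩
  · dsimp only; split_ifs
    exacts [hc s, le_rfl]
  · rw [← Finset.sum_subset h fun s _ hs => by simp [hs]]
    exact Finset.sum_congr rfl fun s hs => by simp [hs]

lemma exists_pos_relation_of_not_linearIndepOn {T : Finset E}
    (hT : ¬LinearIndepOn ℝ id (T : Set E)) :
    ∃ g : E → ℝ, ∑ s ∈ T, g s • s = 0 ∧ ∃ s ∈ T, 0 < g s := by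
  obtain ⟨g, hg, s, hs, hgs⟩ := not_linearIndepOn_finset_iff.mp hT
  rcases hgs.lt_or_gt with hneg | hpos
  · exact ⟨-g, by simpa [neg_smul, Finset.sum_neg_distrib] using hg, s, hs, by simpa using hneg⟩
  · exact ⟨g, by simpa using hg, s, hs, hpos⟩

/-- The Carathéodory step: moving along a positive linear relation `g` until the first
coefficient of `x` vanishes. -/
lemma exists_mem_conicSpan_erase_of_not_linearIndepOn {T : Finset E}
    (hT : ¬LinearIndepOn ℝ id (T : Set E)) {x : E} (hx : x ∈ conicSpan T) :
    ∃ s₀ ∈ T, x ∈ conicSpan (T.erase s₀) := by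
  obtain ⟨c, hc, rfl⟩ := hx
  obtain ⟨g, hg, s₁, hs₁, hgs₁⟩ := exists_pos_relation_of_not_linearIndepOn hT
  obtain ⟨s₀, hs₀, hmin⟩ := (T.filter (0 < g ·)).exists_min_image (fun s => c s / g s)
    ⟨s₁, Finset.mem_filter.mpr ⟨hs₁, hgs₁⟩⟩
  obtain ⟨hs₀T, hgs₀⟩ := Finset.mem_filter.mp hs₀
  set t := c s₀ / g s₀
  have ht : 0 ≤ t := div_nonneg (hc s₀) hgs₀.le
  have hnonneg : ∀ s ∈ T, 0 ≤ c s - t * g s := by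
    intro s hs
    by_cases hgs : 0 < g s
    · have := (le_div_iff₀ hgs).mp (hmin s (Finset.mem_filter.mpr ⟨hs, hgs⟩))
      linarith
    · linarith [show 0 ≤ c s from hc s, mul_nonpos_of_nonneg_of_nonpos ht (not_lt.mp hgs)]
  refine ⟨s₀, hs₀T, fun s => max (c s - t * g s) 0, fun s => le_max_right _ _, ?_⟩
  calc ∑ s ∈ T, c s • s
      = ∑ s ∈ T, (c s - t * g s) • s := by
        simp only [sub_smul, Finset.sum_sub_distrib, mul_smul, ← Finset.smul_sum, hg, smul_zero,
          sub_zero]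
    _ = ∑ s ∈ T.erase s₀, (c s - t * g s) • s := by
        rw [Finset.sum_erase _ (by rw [div_mul_cancel₀ _ hgs₀.ne', sub_self, zero_smul])]
    _ = ∑ s ∈ T.erase s₀, max (c s - t * g s) 0 • s :=
        Finset.sum_congr rfl fun s hs => by
          rw [max_eq_left (hnonneg s (Finset.mem_of_mem_erase hs))]

lemma exists_linearIndepOn_subset_mem_conicSpan (T : Finset E) {x : E}
    (hx : x ∈ conicSpan T) :
    ∃ T' ⊆ T, LinearIndepOn ℝ id (T' : Set E) ∧ x ∈ conicSpan T' := by
  induction T using Finset.strongInduction with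
  | H T ih =>
    by_cases hT : LinearIndepOn ℝ id (T : Set E)
    · exact ⟨T, subset_rfl, hT, hx⟩
    obtain ⟨s₀, hs₀, hx'⟩ := exists_mem_conicSpan_erase_of_not_linearIndepOn hT hx
    obtain ⟨T', hT', hli, hxT'⟩ := ih _ (Finset.erase_ssubset hs₀) hx'
    exact ⟨T', hT'.trans (Finset.erase_subset _ _), hli, hxT'⟩

variable [TopologicalSpace E] [IsTopologicalAddGroup E] [ContinuousSMul ℝ E] [T2Space E]

lemma isClosed_conicSpan_of_linearIndepOn {T : Finset E}
    (hT : LinearIndepOn ℝ id (T : Set E)) : IsClosed (conicSpan T) := by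
  let L := Fintype.linearCombination ℝ (fun s : (T : Set E) => (s : E))
  have hL : LinearMap.ker L = ⊥ := by
    rw [LinearMap.ker_eq_bot']
    exact fun f hf => funext (Fintype.linearIndependent_iff.mp hT f hf)
  have himage : conicSpan T = L '' Set.Ici 0 := by
    ext x
    constructor
    · rintro ⟨c, hc, rfl⟩
      refine ⟨fun s => c s, fun s => hc s, ?_⟩
      simp [L, Fintype.linearCombination_apply, Finset.sum_attach T (fun s => c s • s)]
    · rintro ⟨f, hf, rfl⟩
      refine ⟨fun s => if h : s ∈ T then f ⟨s, h⟩ else 0, fun s => ?_, ?_⟩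
      · dsimp only; split_ifs
        exacts [hf _, le_rfl]
      · rw [← Finset.sum_attach T]
        simp [L, Fintype.linearCombination_apply]
  rw [himage]
  exact (L.isClosedEmbedding_of_injective hL).isClosedMap _ isClosed_Ici

lemma isClosed_conicSpan (S : Finset E) : IsClosed (conicSpan S) := by
  have hunion : conicSpan S =
      ⋃ T ∈ S.powerset.filter (fun T : Finset E => LinearIndepOn ℝ id (T : Set E)),
        conicSpan T := by
    ext x
    simp only [Set.mem_iUnion, Finset.mem_filter, Finset.mem_powerset, exists_prop]
    constructor
    · intro hx
      obtain ⟨T, hTS, hT, hxT⟩ := exists_linearIndepOn_subset_mem_conicSpan S hx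
      exact ⟨T, ⟨hTS, hT⟩, hxT⟩
    · rintro ⟨T, ⟨hTS, -⟩, hxT⟩
      exact conicSpan_mono hTS hxT
  rw [hunion]
  exact isClosed_biUnion_finset fun T hT =>
    isClosed_conicSpan_of_linearIndepOn (Finset.mem_filter.mp hT).2

end ConicSpan

lemma mem_conicSpan_of_forall_inner_nonpos {E : Type*} [NormedAddCommGroup E]
    [InnerProductSpace ℝ E] [CompleteSpace E] {S : Finset E} {v : E}
    (hv : ∀ w, (∀ x ∈ S, ⟪x, w⟫ ≤ 0) → ⟪v, w⟫ ≤ 0) : v ∈ conicSpan S := by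
  by_contra hvS
  let K : ProperCone ℝ E :=
    { carrier := conicSpan S
      add_mem' := add_mem_conicSpan
      zero_mem' := zero_mem_conicSpan S
      smul_mem' := fun c _ hx => smul_mem_conicSpan hx c.2
      isClosed' := isClosed_conicSpan S }
  obtain ⟨y, hyK, hvy⟩ := K.hyperplane_separation' hvS
  have := hv (-y) fun x hx => by
    simpa [inner_neg_right] using hyK x (mem_conicSpan_of_mem hx)
  rw [inner_neg_right] at this
  linarith

lemma conicSpan_subset_coneHull (T : Finset F) : conicSpan T ⊆ coneHull (T : Set F) := by
  rintro _ ⟨c, hc, rfl⟩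
  refine ⟨T.card, fun i => c (T.equivFin.symm i), fun i => T.equivFin.symm i,
    fun i => hc _, fun i => (T.equivFin.symm i).2, ?_⟩
  rw [← Finset.sum_coe_sort T]
  exact (Equiv.sum_comp T.equivFin.symm fun s => c s • (s : F)).symm

lemma coneHull_eq_bipolar [CompleteSpace F] {s : Set F} (hs : s.Finite) :
    coneHull s = {v | ∀ w, (∀ x ∈ s, ⟪x, w⟫ ≤ 0) → ⟪v, w⟫ ≤ 0} := by
  refine Set.Subset.antisymm ?_ fun v hv => ?_
  · rintro _ ⟨n, c, y, hc, hy, rfl⟩ w hw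
    rw [sum_inner]
    exact Finset.sum_nonpos fun i _ => by
      rw [real_inner_smul_left]
      exact mul_nonpos_of_nonneg_of_nonpos (hc i) (hw _ (hy i))
  · rw [← hs.coe_toFinset]
    exact conicSpan_subset_coneHull _
      (mem_conicSpan_of_forall_inner_nonpos fun w hw => hv w (by simpa using hw))

section Polyhedron

variable {m p : ℕ} {d : Fin p → Euc m} {β : Fin p → ℝ} {zb : Euc m}

lemma exists_pos_add_smul_mem_cpwlDom (hzb : zb ∈ cpwlDom d β) {w : Euc m}
    (hw : ∀ i ∈ Iact d β zb, ⟪d i, w⟫ ≤ 0) : ∃ t > (0 : ℝ), zb + t • w ∈ cpwlDom d β := by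
  have hfeasible : ∀ᶠ t in 𝓝[>] (0 : ℝ), zb + t • w ∈ cpwlDom d β := by
    refine Filter.eventually_all.mpr fun i => ?_
    by_cases hi : i ∈ Iact d β zb
    · filter_upwards [self_mem_nhdsWithin] with t (ht : 0 < t)
      rw [inner_add_right, real_inner_smul_right, hi]
      nlinarith [hw i hi]
    · have hcont : Continuous fun t : ℝ => ⟪d i, zb + t • w⟫ := by fun_prop
      have hlt : ⟪d i, zb + (0 : ℝ) • w⟫ < β i := by
        simpa using lt_of_le_of_ne (hzb i) hi
      exact ((hcont.tendsto 0).eventually_lt_const hlt).filter_mono nhdsWithin_le_nhds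
        |>.mono fun t ht => ht.le
  exact (hfeasible.and self_mem_nhdsWithin).exists.imp fun t ht => ⟨ht.2, ht.1⟩

lemma normalCone_cpwlDom_eq (hzb : zb ∈ cpwlDom d β) :
    {v : Euc m | ∀ z ∈ cpwlDom d β, ⟪v, z - zb⟫ ≤ 0} =
      {v | ∀ w, (∀ i ∈ Iact d β zb, ⟪d i, w⟫ ≤ 0) → ⟪v, w⟫ ≤ 0} := by
  refine Set.Subset.antisymm (fun v hv w hw => ?_) fun v hv z hz => hv _ fun i hi => ?_
  · obtain ⟨t, ht, hmem⟩ := exists_pos_add_smul_mem_cpwlDom hzb hw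
    have := hv _ hmem
    rw [add_sub_cancel_left, real_inner_smul_right] at this
    exact nonpos_of_mul_nonpos_right this ht
  · rw [inner_sub_right, hi]
    linarith [hz i]

lemma coneHull_active_eq_normalCone (hzb : zb ∈ cpwlDom d β) :
    coneHull (d '' Iact d β zb) = {v : Euc m | ∀ z ∈ cpwlDom d β, ⟪v, z - zb⟫ ≤ 0} := by
  rw [coneHull_eq_bipolar (Set.toFinite _), normalCone_cpwlDom_eq hzb]
  simp only [Set.forall_mem_image]

end Polyhedron

/-- Unlike `Filter.limsup_le_of_le`, no coboundedness is needed: an unbounded-below `u` has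
junk `limsup` equal to `0`. -/
lemma Real.limsup_nonpos_of_eventually_nonpos {α : Type*} {f : Filter α} {u : α → ℝ}
    (h : ∀ᶠ x in f, u x ≤ 0) : Filter.limsup u f ≤ 0 := by
  rw [Filter.limsup_eq]
  by_cases hb : BddBelow {a : ℝ | ∀ᶠ x in f, u x ≤ a}
  · exact csInf_le hb h
  · rw [Real.sInf_of_not_bddBelow hb]

lemma mem_frechetNormal_of_forall_inner_nonpos {Ω : Set F} {x v : F}
    (hv : ∀ y ∈ Ω, ⟪v, y - x⟫ ≤ 0) : v ∈ frechetNormal Ω x :=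
  Real.limsup_nonpos_of_eventually_nonpos <| eventually_nhdsWithin_of_forall fun y hy =>
    div_nonpos_of_nonpos_of_nonneg (hv y hy) (norm_nonneg _)

lemma frechetNormal_subset_limitingNormal {Ω : Set F} {x : F} (hx : x ∈ Ω) :
    frechetNormal Ω x ⊆ limitingNormal Ω x := fun v hv =>
  ⟨fun _ => x, fun _ => v, fun _ => hx, tendsto_const_nhds, tendsto_const_nhds, fun _ => hv⟩

lemma ne_top_of_mem_subdiff {θ : F → EReal} {z v z₀ : F} (hv : v ∈ subdiff θ z)
    (hz₀ : θ z₀ ≠ ⊤) : θ z ≠ ⊤ := by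
  intro hz
  have := hv z₀
  rw [hz, EReal.top_add_coe, top_le_iff] at this
  exact hz₀ this

/-- A vector normal to `dom θ` at `zb` gives the normal `(v, 0)` to `gph ∂θ`, since the graph
lies in `dom θ × F`. -/
lemma mem_sosd_zero_of_forall_inner_nonpos {θ : F → EReal} {zb vb v : F} (hzb : θ zb ≠ ⊤)
    (hvb : vb ∈ subdiff θ zb) (hv : ∀ z, θ z ≠ ⊤ → ⟪v, z - zb⟫ ≤ 0) :
    v ∈ sosd θ zb vb 0 := by
  refine frechetNormal_subset_limitingNormal (by simpa [pl2] using hvb)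
    (mem_frechetNormal_of_forall_inner_nonpos fun q hq => ?_)
  simpa [pl2] using hv _ (ne_top_of_mem_subdiff hq hzb)

lemma cpwlFun_ne_top_iff {m l p : ℕ} {a : Fin l → Euc m} {α : Fin l → ℝ} {d : Fin p → Euc m}
    {β : Fin p → ℝ} {z : Euc m} : cpwlFun a α d β z ≠ ⊤ ↔ z ∈ cpwlDom d β := by
  unfold cpwlFun
  split_ifs with hz <;> simp [hz]

theorem singular_subdiff_subset_sosd_at_zero_general {n dd m l p : ℕ}
    (a : Fin l → Euc m) (α : Fin l → ℝ) (d : Fin p → Euc m) (β : Fin p → ℝ)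
    (zb : Euc m) (hzb : zb ∈ cpwlDom d β)
    (vb : Euc m) (hvb : vb ∈ subdiff (cpwlFun a α d β) zb)
    (Φ : Euc n × Euc dd → Euc m) (xb : Euc n) (wb : Euc dd) :
    coneHull (d '' Iact d β zb) = {v : Euc m | ∀ z ∈ cpwlDom d β, ⟪v, z - zb⟫ ≤ 0} ∧
    {v : Euc m | ∀ z ∈ cpwlDom d β, ⟪v, z - zb⟫ ≤ 0} ⊆ sosd (cpwlFun a α d β) zb vb 0 ∧
    (sosd (cpwlFun a α d β) zb vb 0 ∩
        {y | ContinuousLinearMap.adjoint (fderiv ℝ (fun x => Φ (x, wb)) xb) y = 0} = {0} →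
      {v : Euc m | ∀ z ∈ cpwlDom d β, ⟪v, z - zb⟫ ≤ 0} ∩
        {y | ContinuousLinearMap.adjoint (fderiv ℝ (fun x => Φ (x, wb)) xb) y = 0} = {0}) := by
  have hnormal : {v : Euc m | ∀ z ∈ cpwlDom d β, ⟪v, z - zb⟫ ≤ 0} ⊆
      sosd (cpwlFun a α d β) zb vb 0 := fun v hv =>
    mem_sosd_zero_of_forall_inner_nonpos (cpwlFun_ne_top_iff.mpr hzb) hvb
      fun z hz => hv z (cpwlFun_ne_top_iff.mp hz)
  refine ⟨coneHull_active_eq_normalCone hzb, hnormal, fun hSOQC => ?_⟩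
  refine Set.Subset.antisymm (hSOQC ▸ Set.inter_subset_inter_left _ hnormal) ?_
  rintro _ rfl
  exact ⟨fun z _ => by simp, map_zero _⟩

/-- The singular subdifferential of a CPWL function `θ` at `zb`, which
equals the convex normal cone `{v : ⟨v, z - zb⟩ ≤ 0 for all z ∈ dom θ} = cone{d i : i ∈ I(zb)}`,
is contained in `∂²θ(zb,vb)(0)`; consequently, the second-order qualification condition
implies the first-order qualification condition. -/
theorem singular_subdiff_subset_sosd_at_zero {n dd m l p : ℕ} (hl : 0 < l)
    (a : Fin l → Euc m) (α : Fin l → ℝ) (d : Fin p → Euc m) (β : Fin p → ℝ)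
    (hdom : (cpwlDom d β).Nonempty) (zb : Euc m) (hzb : zb ∈ cpwlDom d β)
    (vb : Euc m) (hvb : vb ∈ subdiff (cpwlFun a α d β) zb)
    (Φ : Euc n × Euc dd → Euc m) (xb : Euc n) (wb : Euc dd)
    (hΦ : ContDiffAt ℝ 2 Φ (xb, wb)) (hΦzb : Φ (xb, wb) = zb) :
    coneHull (d '' Iact d β zb) = {v : Euc m | ∀ z ∈ cpwlDom d β, ⟪v, z - zb⟫ ≤ 0} ∧
    {v : Euc m | ∀ z ∈ cpwlDom d β, ⟪v, z - zb⟫ ≤ 0} ⊆ sosd (cpwlFun a α d β) zb vb 0 ∧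
    (sosd (cpwlFun a α d β) zb vb 0 ∩
        {y | ContinuousLinearMap.adjoint (fderiv ℝ (fun x => Φ (x, wb)) xb) y = 0} = {0} →
      {v : Euc m | ∀ z ∈ cpwlDom d β, ⟪v, z - zb⟫ ≤ 0} ∩
        {y | ContinuousLinearMap.adjoint (fderiv ℝ (fun x => Φ (x, wb)) xb) y = 0} = {0}) :=
  singular_subdiff_subset_sosd_at_zero_general a α d β zb hzb vb hvb Φ xb wb
end
end
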